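/- arXiv:2212.00835 — 3 statements merged into one kernel-verified Lean document; each statement's English description precedes it below -/
import Mathlib

section
/- Let f(x) = Π_{i=1}^n |x−a_i|^{−β} with β > 0 and distinct poles a_1,...,a_n ∈ R^N. Then for x ∉ {a_1,...,a_n}, Δf(x)/f(x) = Σ_{i=1}^n (nβ^2 − β(N−2))/|x−a_i|^2 − β^2 V(x), where V(x) = (1/2) Σ_{i≠j} |a_i−a_j|^2/(|x−a_i|^2 |x−a_j|^2). -/
open Finset

/-- The Laplacian of `f : ℝ^N → ℝ`, `Δf(x) = ∑ᵢ ∂²f/∂xᵢ²(x)`. -/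
noncomputable def laplacian {N : ℕ} (f : EuclideanSpace ℝ (Fin N) → ℝ)
    (x : EuclideanSpace ℝ (Fin N)) : ℝ :=
  ∑ i : Fin N,
    iteratedFDeriv ℝ 2 f x ![EuclideanSpace.single i (1 : ℝ), EuclideanSpace.single i (1 : ℝ)]

lemma aux_normsq {N : ℕ} (a y : EuclideanSpace ℝ (Fin N)) :
    HasFDerivAt (fun z : EuclideanSpace ℝ (Fin N) => ‖z - a‖ ^ 2)
      ((2:ℕ) • innerSL ℝ (y - a)) y := by
  simpa using ((hasFDerivAt_id y).sub_const a).norm_sq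

lemma aux_factor {N : ℕ} {β : ℝ} (a : EuclideanSpace ℝ (Fin N)) {y : EuclideanSpace ℝ (Fin N)}
    (h : y ≠ a) :
    HasFDerivAt (fun z : EuclideanSpace ℝ (Fin N) => ‖z - a‖ ^ (-β : ℝ))
      ((‖y - a‖ ^ (-β : ℝ) * (-β * (‖y - a‖ ^ 2)⁻¹)) • innerSL ℝ (y - a)) y := by
  have hr : (0:ℝ) < ‖y - a‖ := by rw [norm_pos_iff, sub_ne_zero]; exact h
  have h2 : HasDerivAt (fun t : ℝ => t ^ (-β/2 : ℝ))
      ((-β/2) * (‖y - a‖ ^ 2 : ℝ) ^ ((-β/2) - 1 : ℝ)) (‖y - a‖ ^ 2) :=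
    Real.hasDerivAt_rpow_const (Or.inl (by positivity))
  have h3 := h2.comp_hasFDerivAt y (aux_normsq a y)
  have efun : ∀ z : EuclideanSpace ℝ (Fin N),
      ((fun t : ℝ => t ^ (-β/2 : ℝ)) ∘ fun z => ‖z - a‖ ^ 2) z = ‖z - a‖ ^ (-β : ℝ) := by
    intro z
    simp only [Function.comp]
    rw [← Real.rpow_natCast ‖z - a‖ 2, ← Real.rpow_mul (norm_nonneg _)]
    congr 1
    push_cast; ring
  have ecoef : (‖y - a‖ ^ 2 : ℝ) ^ ((-β/2) - 1 : ℝ)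
      = ‖y - a‖ ^ (-β : ℝ) / ‖y - a‖ ^ 2 := by
    rw [← Real.rpow_natCast ‖y - a‖ 2, ← Real.rpow_mul (norm_nonneg _),
      ← Real.rpow_sub hr]
    congr 1
    push_cast; ring
  have h4 := h3.congr_of_eventuallyEq (Filter.Eventually.of_forall fun z => (efun z).symm)
  refine h4.congr_fderiv (Eq.symm ?_)
  rw [ecoef]
  refine ContinuousLinearMap.ext fun v => ?_
  simp only [ContinuousLinearMap.smul_apply, smul_eq_mul, ← Nat.cast_smul_eq_nsmul ℝ,
    ContinuousLinearMap.coe_smul', Pi.smul_apply]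
  push_cast
  ring

lemma helper_eval {n : ℕ} (P B : ℝ) (t u : Fin n → ℝ) (h : ∀ i, t i = u i) :
    P * (∑ i, t i) + B * (P * B) = P * (B ^ 2 + ∑ i, u i) := by
  rw [Finset.sum_congr rfl fun i _ => h i]; ring

lemma aux_prod {N n : ℕ} {β : ℝ} (a : Fin n → EuclideanSpace ℝ (Fin N))
    {y : EuclideanSpace ℝ (Fin N)} (hy : ∀ i, y ≠ a i) :
    HasFDerivAt (fun z : EuclideanSpace ℝ (Fin N) => ∏ i, ‖z - a i‖ ^ (-β : ℝ))
      ((∏ i, ‖y - a i‖ ^ (-β : ℝ)) •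
        ∑ i, (-β * (‖y - a i‖ ^ 2)⁻¹) • innerSL ℝ (y - a i)) y := by
  classical
  have h := HasFDerivAt.finset_prod (u := univ)
    (g := fun i (z : EuclideanSpace ℝ (Fin N)) => ‖z - a i‖ ^ (-β : ℝ))
    (g' := fun i => (‖y - a i‖ ^ (-β : ℝ) * (-β * (‖y - a i‖ ^ 2)⁻¹)) • innerSL ℝ (y - a i))
    (fun i _ => aux_factor (a i) (hy i))
  refine h.congr_fderiv (Eq.symm ?_)
  rw [Finset.smul_sum]
  refine Finset.sum_congr rfl fun i _ => ?_
  rw [smul_smul, smul_smul]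
  congr 1
  rw [← Finset.prod_erase_mul univ _ (mem_univ i)]
  ring

/-- For `f(x) = ∏ᵢ ‖x−aᵢ‖^{−β}`, `β > 0`, distinct poles, and `x` away from the poles,
`Δf(x)/f(x) = ∑ᵢ (nβ² − β(N−2))/‖x−aᵢ‖² − β² V(x)` where
`V(x) = (1/2) ∑_{i≠j} ‖aᵢ−aⱼ‖²/(‖x−aᵢ‖²‖x−aⱼ‖²)`. -/
theorem laplacian_multipolar_div {N n : ℕ} (hN : 3 ≤ N) (hn : 2 ≤ n)
    {β : ℝ} (hβ : 0 < β)
    (a : Fin n → EuclideanSpace ℝ (Fin N)) (ha : Function.Injective a)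
    (f V : EuclideanSpace ℝ (Fin N) → ℝ)
    (hf : ∀ x, f x = ∏ i : Fin n, ‖x - a i‖ ^ (-β : ℝ))
    (hV : ∀ x, V x = (1 / 2) * ∑ i : Fin n, ∑ j : Fin n, (if i ≠ j then
        ‖a i - a j‖ ^ 2 / (‖x - a i‖ ^ 2 * ‖x - a j‖ ^ 2) else 0))
    (x : EuclideanSpace ℝ (Fin N)) (hx : ∀ i, x ≠ a i) :
    laplacian f x / f x =
      ∑ i : Fin n, (n * β ^ 2 - β * (N - 2)) / ‖x - a i‖ ^ 2 - β ^ 2 * V x := by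
  classical
  have hr : ∀ i, (0:ℝ) < ‖x - a i‖ := fun i => norm_pos_iff.mpr (sub_ne_zero.mpr (hx i))
  have hs : ∀ i, (0:ℝ) < ‖x - a i‖ ^ 2 := fun i => pow_pos (hr i) 2
  have hfx : 0 < f x := by
    rw [hf]; exact Finset.prod_pos fun i _ => Real.rpow_pos_of_pos (hr i) _
  have hU : ∀ᶠ y in nhds x, ∀ i, y ≠ a i := by
    rw [Filter.eventually_all]
    exact fun i => eventually_ne_nhds (hx i)
  -- the first derivative of f near x
  have key : ∀ y : EuclideanSpace ℝ (Fin N), (∀ i, y ≠ a i) →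
      HasFDerivAt f ((∏ i, ‖y - a i‖ ^ (-β : ℝ)) •
        ∑ i, (-β * (‖y - a i‖ ^ 2)⁻¹) • innerSL ℝ (y - a i)) y := fun y hy =>
    (aux_prod a hy).congr_of_eventuallyEq (Filter.Eventually.of_forall hf)
  have hfderiv : ∀ᶠ y in nhds x, fderiv ℝ f y = (∏ i, ‖y - a i‖ ^ (-β : ℝ)) •
      ∑ i, (-β * (‖y - a i‖ ^ 2)⁻¹) • innerSL ℝ (y - a i) :=
    hU.mono fun y hy => (key y hy).fderiv
  -- smoothness at x
  have hcd : ContDiffAt ℝ 2 f x := by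
    have h1 : ContDiffAt ℝ 2 (fun z : EuclideanSpace ℝ (Fin N) =>
        ∏ i, ‖z - a i‖ ^ (-β : ℝ)) x := by
      refine contDiffAt_prod (𝕜 := ℝ)
        (f := fun i (z : EuclideanSpace ℝ (Fin N)) => ‖z - a i‖ ^ (-β : ℝ)) fun i _ => ?_
      exact (Real.contDiffAt_rpow_const_of_ne (hr i).ne').comp x
        ((contDiffAt_norm ℝ (sub_ne_zero.mpr (hx i))).comp x
          (contDiffAt_id.sub contDiffAt_const))
    exact h1.congr_of_eventuallyEq (Filter.Eventually.of_forall hf)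
  have hdiff : DifferentiableAt ℝ (fderiv ℝ f) x :=
    (hcd.fderiv_right (m := 1) (by norm_num)).differentiableAt one_ne_zero
  -- the Laplacian as a sum of directional second derivatives
  have lap : laplacian f x = ∑ k : Fin N,
      fderiv ℝ (fun y => fderiv ℝ f y (EuclideanSpace.single k 1)) x
        (EuclideanSpace.single k 1) := by
    unfold laplacian
    refine Finset.sum_congr rfl fun k _ => ?_
    rw [iteratedFDeriv_two_apply,
      fderiv_clm_apply hdiff (differentiableAt_const (EuclideanSpace.single k 1))]
    simp
  -- per-direction computation
  have hper : ∀ k : Fin N,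
      fderiv ℝ (fun y => fderiv ℝ f y (EuclideanSpace.single k 1)) x
          (EuclideanSpace.single k 1)
      = f x * ((∑ i, -β * (‖x - a i‖ ^ 2)⁻¹ * (x k - a i k)) ^ 2
        + ∑ i, (-β * (‖x - a i‖ ^ 2)⁻¹
            + 2 * β * ((‖x - a i‖ ^ 2) ^ 2)⁻¹ * (x k - a i k) ^ 2)) := by
    intro k
    -- eventual equality with an explicit scalar function
    have hev : (fun y => fderiv ℝ f y (EuclideanSpace.single k 1)) =ᶠ[nhds x]
        (fun y => (∏ i, ‖y - a i‖ ^ (-β : ℝ)) *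
          ∑ i, -β * (‖y - a i‖ ^ 2)⁻¹ * (y k - a i k)) := by
      refine hfderiv.mono fun y hy => ?_
      simp only [hy, ContinuousLinearMap.smul_apply, ContinuousLinearMap.sum_apply,
        smul_eq_mul]
      congr 1
      refine Finset.sum_congr rfl fun i _ => ?_
      simp only [ContinuousLinearMap.smul_apply, innerSL_apply_apply,
        EuclideanSpace.inner_single_right, conj_trivial, PiLp.sub_apply, smul_eq_mul]
      ring
    -- derivatives of the pieces
    have hinv : ∀ i, HasFDerivAt (fun y : EuclideanSpace ℝ (Fin N) => (‖y - a i‖ ^ 2)⁻¹)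
        ((-((‖x - a i‖ ^ 2) ^ 2)⁻¹) • ((2:ℕ) • innerSL ℝ (x - a i))) x := fun i =>
      (hasDerivAt_inv (hs i).ne').comp_hasFDerivAt x (aux_normsq (a i) x)
    have hc : ∀ i, HasFDerivAt (fun y : EuclideanSpace ℝ (Fin N) => -β * (‖y - a i‖ ^ 2)⁻¹)
        ((-β) • ((-((‖x - a i‖ ^ 2) ^ 2)⁻¹) • ((2:ℕ) • innerSL ℝ (x - a i)))) x :=
      fun i => (hinv i).const_mul (-β)
    have hyk : ∀ i : Fin n, HasFDerivAt (fun y : EuclideanSpace ℝ (Fin N) => y k - a i k)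
        (PiLp.proj (𝕜 := ℝ) 2 (fun _ : Fin N => ℝ) k) x :=
      fun i => (PiLp.proj (𝕜 := ℝ) 2 (fun _ : Fin N => ℝ) k).hasFDerivAt.sub_const (a i k)
    have hS := HasFDerivAt.fun_sum (u := univ) (fun i (_ : i ∈ univ) => (hc i).fun_mul (hyk i))
    have hP := aux_prod (β := β) a hx
    have hg := hP.fun_mul hS
    rw [(hev.fderiv_eq : _), hg.fderiv]
    -- evaluate the derivative at `single k 1`
    rw [ContinuousLinearMap.add_apply, ContinuousLinearMap.smul_apply,
      ContinuousLinearMap.smul_apply, ContinuousLinearMap.sum_apply,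
      ContinuousLinearMap.smul_apply, ContinuousLinearMap.sum_apply]
    rw [hf x]
    simp only [ContinuousLinearMap.add_apply, ContinuousLinearMap.smul_apply,
      PiLp.proj_apply, innerSL_apply_apply, EuclideanSpace.inner_single_right, conj_trivial,
      EuclideanSpace.single_apply, PiLp.sub_apply, smul_eq_mul, if_true, one_mul,
      eq_self_iff_true, nsmul_eq_mul, Nat.cast_ofNat]
    exact helper_eval _ _ _ _ fun i => by ring
  -- inner product facts
  have fact2 : ∀ i j, ∑ k : Fin N, (x k - a i k) * (x k - a j k)
      = (‖x - a i‖ ^ 2 + ‖x - a j‖ ^ 2 - ‖a i - a j‖ ^ 2) / 2 := by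
    intro i j
    have h1 : (inner ℝ (x - a i) (x - a j) : ℝ) = ∑ k : Fin N, (x k - a i k) * (x k - a j k) := by
      rw [PiLp.inner_apply]
      exact Finset.sum_congr rfl fun k _ => by
        simp [RCLike.inner_apply, conj_trivial, PiLp.sub_apply, mul_comm]
    have h2 := norm_sub_sq_real (x - a i) (x - a j)
    have h3 : (x - a i) - (x - a j) = a j - a i := by abel
    rw [h3, norm_sub_rev] at h2
    linarith
  have fact_sq : ∀ i, ∑ k : Fin N, (x k - a i k) ^ 2 = ‖x - a i‖ ^ 2 := by
    intro i
    have h := fact2 i i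
    simp only [sub_self, norm_zero] at h
    calc ∑ k : Fin N, (x k - a i k) ^ 2
        = ∑ k : Fin N, (x k - a i k) * (x k - a i k) :=
          Finset.sum_congr rfl fun k _ => pow_two _
      _ = ‖x - a i‖ ^ 2 := by rw [h]; ring
  -- reduce the goal
  rw [lap, Finset.sum_congr rfl fun k (_ : k ∈ univ) => hper k, ← Finset.mul_sum,
    mul_div_cancel_left₀ _ hfx.ne', Finset.sum_add_distrib]
  have hB : ∑ k : Fin N, (∑ i : Fin n, -β * (‖x - a i‖ ^ 2)⁻¹ * (x k - a i k)) ^ 2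
      = ∑ i : Fin n, ∑ j : Fin n,
          (β ^ 2 / 2 * (‖x - a i‖ ^ 2)⁻¹ + β ^ 2 / 2 * (‖x - a j‖ ^ 2)⁻¹
            - β ^ 2 / 2 * (‖a i - a j‖ ^ 2 / (‖x - a i‖ ^ 2 * ‖x - a j‖ ^ 2))) := by
    have e1 : ∀ k : Fin N, (∑ i : Fin n, -β * (‖x - a i‖ ^ 2)⁻¹ * (x k - a i k)) ^ 2
        = ∑ i : Fin n, ∑ j : Fin n, (-β * (‖x - a i‖ ^ 2)⁻¹ * (x k - a i k)) *
            (-β * (‖x - a j‖ ^ 2)⁻¹ * (x k - a j k)) := fun k => by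
      rw [pow_two, Finset.sum_mul_sum]
    rw [Finset.sum_congr rfl fun k (_ : k ∈ univ) => e1 k, Finset.sum_comm]
    refine Finset.sum_congr rfl fun i _ => ?_
    rw [Finset.sum_comm]
    refine Finset.sum_congr rfl fun j _ => ?_
    have e2 : ∑ k : Fin N, (-β * (‖x - a i‖ ^ 2)⁻¹ * (x k - a i k)) *
        (-β * (‖x - a j‖ ^ 2)⁻¹ * (x k - a j k))
        = (-β * (‖x - a i‖ ^ 2)⁻¹) * (-β * (‖x - a j‖ ^ 2)⁻¹) *
          ((‖x - a i‖ ^ 2 + ‖x - a j‖ ^ 2 - ‖a i - a j‖ ^ 2) / 2) := by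
      rw [← fact2 i j, Finset.mul_sum]
      exact Finset.sum_congr rfl fun k _ => by ring
    rw [e2]
    have hi := (hs i).ne'
    have hj := (hs j).ne'
    have hi' := (hr i).ne'
    have hj' := (hr j).ne'
    field_simp
    ring
  have hA : ∑ k : Fin N, ∑ i : Fin n, (-β * (‖x - a i‖ ^ 2)⁻¹
      + 2 * β * ((‖x - a i‖ ^ 2) ^ 2)⁻¹ * (x k - a i k) ^ 2)
      = ∑ i : Fin n, (2 * β - β * N) * (‖x - a i‖ ^ 2)⁻¹ := by
    rw [Finset.sum_comm]
    refine Finset.sum_congr rfl fun i _ => ?_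
    rw [Finset.sum_add_distrib, Finset.sum_const, ← Finset.mul_sum, fact_sq i]
    simp only [card_univ, Fintype.card_fin, nsmul_eq_mul]
    have hi := (hs i).ne'
    field_simp
    ring
  rw [hB, hA]
  have hVx : V x = 1 / 2 * ∑ i : Fin n, ∑ j : Fin n,
      ‖a i - a j‖ ^ 2 / (‖x - a i‖ ^ 2 * ‖x - a j‖ ^ 2) := by
    rw [hV]
    congr 1
    refine Finset.sum_congr rfl fun i _ => Finset.sum_congr rfl fun j _ => ?_
    by_cases hij : i = j
    · subst hij; simp
    · rw [if_pos hij]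
  rw [hVx]
  simp only [Finset.sum_add_distrib, Finset.sum_sub_distrib, Finset.sum_const,
    card_univ, Fintype.card_fin, nsmul_eq_mul, ← Finset.mul_sum, div_eq_mul_inv]
  ring
end

section
/- Let f(x) = Π_{i=1}^n |x−a_i|^{−β} with β = (N+K_μ−2)/n, let θ_ε be the cut-off equal to 1 on B(0, R/ε), 0 outside B(0, 2R/ε), with |∇θ_ε| ≤ c ε/R, and set φ_ε = θ_ε f. If μ(x) ≤ C/|x|^γ for |x| > max_i |a_i| with γ > −(N+2K_μ−2), then ∫_{R^N} |∇θ_ε|^2 f^2 μ dx ≤ C' ε^{(N+K_μ−2)+K_μ+γ}, which tends to 0 as ε → 0. -/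
open MeasureTheory Finset
open scoped RealInnerProductSpace

set_option maxHeartbeats 1000000 in
/-- Cut-off estimate: with `f(x) = ∏ᵢ ‖x−aᵢ‖^{−β}`, `β = (N+K_μ−2)/n`, and a cut-off
`θ_ε` equal to `1` on `B(0, R/ε)`, `0` outside `B(0, 2R/ε)`, `|∇θ_ε| ≤ c₀ ε/R`, if
`μ(x) ≤ C/‖x‖^γ` for `‖x‖ > maxᵢ‖aᵢ‖` with `γ > −(N+2K_μ−2)`, then
`∫ |∇θ_ε|² f² μ ≤ C' ε^{(N+K_μ−2)+K_μ+γ} → 0` as `ε → 0`. -/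
theorem cutoff_estimate {N n : ℕ} (hN : 3 ≤ N) (hn : 2 ≤ n)
    (Kμ : ℝ) (hKμ : 2 - (N : ℝ) < Kμ)
    (a : Fin n → EuclideanSpace ℝ (Fin N)) (ha : Function.Injective a)
    (R : ℝ) (hR : 0 < R) (haR : ∀ i, ‖a i‖ < R)
    (M : ℝ) (hM : 0 < M) (hMa : ∀ i, ‖a i‖ ≤ M)
    (c : ℝ) (hc : 1 < c) (c₀ : ℝ) (hc₀ : 0 < c₀)
    (γ C : ℝ) (hγ : -((N : ℝ) + 2 * Kμ - 2) < γ)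
    (μ : EuclideanSpace ℝ (Fin N) → ℝ) (hμ0 : ∀ x, 0 ≤ μ x)
    (hμbd : ∀ x : EuclideanSpace ℝ (Fin N), M < ‖x‖ → μ x ≤ C / ‖x‖ ^ γ)
    (β : ℝ) (hβ : β = ((N : ℝ) + Kμ - 2) / n)
    (f : EuclideanSpace ℝ (Fin N) → ℝ)
    (hf : ∀ x, f x = ∏ i : Fin n, ‖x - a i‖ ^ (-β : ℝ)) :
    ∃ C' > (0 : ℝ),
      (∀ ε : ℝ, 0 < ε → ε ≤ min 1 (R / (c * M)) →
        ∀ θ : EuclideanSpace ℝ (Fin N) → ℝ, ContDiff ℝ (⊤ : ℕ∞) θ →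
          (∀ x, ‖x‖ < R / ε → θ x = 1) →
          (∀ x, 0 ≤ θ x ∧ θ x ≤ 1) →
          (∀ x, 2 * R / ε < ‖x‖ → θ x = 0) →
          (∀ x, ‖gradient θ x‖ ≤ c₀ * ε / R) →
          ∫ x, ‖gradient θ x‖ ^ 2 * f x ^ 2 * μ x ≤
            C' * ε ^ (((N : ℝ) + Kμ - 2) + Kμ + γ)) ∧
      Filter.Tendsto (fun ε : ℝ => C' * ε ^ (((N : ℝ) + Kμ - 2) + Kμ + γ))
        (nhdsWithin 0 (Set.Ioi 0)) (nhds 0) := by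
  classical
  have hNpos : (0:ℝ) < N := by exact_mod_cast Nat.lt_of_lt_of_le (by norm_num) hN
  have hnpos : (0:ℝ) < n := by exact_mod_cast Nat.lt_of_lt_of_le (by norm_num) hn
  have hE0 : (0:ℝ) < (N:ℝ) + Kμ - 2 := by linarith
  have hEpos : (0:ℝ) < ((N:ℝ) + Kμ - 2) + Kμ + γ := by linarith
  have hβpos : 0 < β := by rw [hβ]; positivity
  have hβn : β * n = (N:ℝ) + Kμ - 2 := by rw [hβ]; field_simp
  have hc1 : (0:ℝ) < 1 - 1/c := by
    have : 1/c < 1 := by rw [div_lt_one (by linarith)]; exact hc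
    linarith
  have hmaxC : (0:ℝ) < max C 1 := lt_of_lt_of_le one_pos (le_max_right _ _)
  set vN := (volume (Metric.closedBall (0 : EuclideanSpace ℝ (Fin N)) 1)).toReal with hvN
  have hvNpos : 0 < vN := by
    rw [hvN]
    refine ENNReal.toReal_pos (ne_of_gt ?_) (measure_closedBall_lt_top).ne
    exact Metric.measure_closedBall_pos volume 0 one_pos
  set Fc := ((1 - 1/c) * R) ^ (-(2 * ((N:ℝ) + Kμ - 2))) with hFcdef
  have hFcpos : 0 < Fc := Real.rpow_pos_of_pos (by positivity) _
  set Mc := (max C 1) * 2 ^ |γ| * R ^ (-γ) with hMcdef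
  have hMcpos : 0 < Mc := by
    have h2 : (0:ℝ) < (2:ℝ) ^ |γ| := Real.rpow_pos_of_pos two_pos _
    have h3 : (0:ℝ) < R ^ (-γ) := Real.rpow_pos_of_pos hR _
    positivity
  set C' := c₀^2 / R^2 * Fc * Mc * (2*R)^N * vN with hC'def
  have hC'pos : 0 < C' := by positivity
  refine ⟨C', hC'pos, ?_, ?_⟩
  · intro ε hε hεle θ hθsm hθ1 hθ01 hθ0 hθgrad
    have hεR : 0 < R / ε := by positivity
    have hεM : ε ≤ R / (c*M) := le_trans hεle (min_le_right _ _)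
    have hcM : c * M ≤ R / ε := by
      rw [le_div_iff₀ hε]
      have := (le_div_iff₀ (by positivity : (0:ℝ) < c*M)).mp hεM
      linarith
    have hMlt : M < R / ε := by nlinarith
    -- gradient vanishes inside and outside
    have hgrad1 : ∀ x : EuclideanSpace ℝ (Fin N), ‖x‖ < R/ε → gradient θ x = 0 := by
      intro x hx
      have hopen : IsOpen {y : EuclideanSpace ℝ (Fin N) | ‖y‖ < R/ε} :=
        isOpen_lt continuous_norm continuous_const
      have hev : θ =ᶠ[nhds x] fun _ => (1:ℝ) := by
        filter_upwards [hopen.mem_nhds hx] with y hy using hθ1 y hy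
      rw [hev.gradient_eq, gradient_fun_const]
    have hgrad2 : ∀ x : EuclideanSpace ℝ (Fin N), 2*R/ε < ‖x‖ → gradient θ x = 0 := by
      intro x hx
      have hopen : IsOpen {y : EuclideanSpace ℝ (Fin N) | 2*R/ε < ‖y‖} :=
        isOpen_lt continuous_const continuous_norm
      have hev : θ =ᶠ[nhds x] fun _ => (0:ℝ) := by
        filter_upwards [hopen.mem_nhds hx] with y hy using hθ0 y hy
      rw [hev.gradient_eq, gradient_fun_const]
    set s := Metric.closedBall (0 : EuclideanSpace ℝ (Fin N)) (2*R/ε) with hs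
    set Bval := (c₀*ε/R)^2 * (Fc * ε ^ (2*((N:ℝ)+Kμ-2))) * (Mc * ε ^ γ) with hBdef
    have hBnonneg : 0 ≤ Bval := by
      have h1 : (0:ℝ) ≤ ε ^ (2*((N:ℝ)+Kμ-2)) := Real.rpow_nonneg hε.le _
      have h2 : (0:ℝ) ≤ ε ^ γ := Real.rpow_nonneg hε.le _
      positivity
    have hrpos : 0 < (1-1/c)*R/ε := by positivity
    have hpt : ∀ x, ‖gradient θ x‖^2 * f x^2 * μ x ≤ s.indicator (fun _ => Bval) x := by
      intro x
      rcases lt_or_ge ‖x‖ (R/ε) with hx | hx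
      · rw [hgrad1 x hx]
        simpa using Set.indicator_nonneg (fun _ _ => hBnonneg) x
      rcases le_or_gt ‖x‖ (2*R/ε) with hx2 | hx2
      · have hxs : x ∈ s := by
          simpa [hs, Metric.mem_closedBall, dist_zero_right] using hx2
        rw [Set.indicator_of_mem hxs]
        have h1 : ‖gradient θ x‖^2 ≤ (c₀*ε/R)^2 :=
          pow_le_pow_left₀ (norm_nonneg _) (hθgrad x) 2
        have hdist : ∀ i, (1-1/c)*R/ε ≤ ‖x - a i‖ := by
          intro i
          have hns : ‖x‖ - ‖a i‖ ≤ ‖x - a i‖ := norm_sub_norm_le x (a i)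
          have hai : ‖a i‖ ≤ M := hMa i
          have hMle : M ≤ R/ε/c := by
            rw [le_div_iff₀ (by linarith : (0:ℝ) < c)]
            nlinarith
          have heq : (1-1/c)*R/ε = R/ε - R/ε/c := by
            field_simp
          rw [heq]
          linarith
        have hf0 : 0 ≤ f x := by
          rw [hf]
          exact Finset.prod_nonneg fun i _ => Real.rpow_nonneg (norm_nonneg _) _
        have hfb : f x ≤ ((1-1/c)*R/ε) ^ (-(β*(n:ℝ))) := by
          rw [hf]
          calc ∏ i : Fin n, ‖x - a i‖ ^ (-β)
              ≤ ∏ _i : Fin n, ((1-1/c)*R/ε) ^ (-β) :=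
                Finset.prod_le_prod (fun i _ => Real.rpow_nonneg (norm_nonneg _) _)
                  (fun i _ => Real.rpow_le_rpow_of_nonpos hrpos (hdist i)
                    (neg_nonpos.mpr hβpos.le))
            _ = (((1-1/c)*R/ε) ^ (-β)) ^ (n:ℕ) := by
                rw [Finset.prod_const, Finset.card_univ, Fintype.card_fin]
            _ = ((1-1/c)*R/ε) ^ (-(β*(n:ℝ))) := by
                rw [← Real.rpow_natCast (((1-1/c)*R/ε) ^ (-β)) n,
                  ← Real.rpow_mul hrpos.le]
                ring_nf
        have hf2 : f x ^ 2 ≤ Fc * ε ^ (2*((N:ℝ)+Kμ-2)) := by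
          calc f x ^ 2 ≤ (((1-1/c)*R/ε) ^ (-(β*(n:ℝ))))^2 := pow_le_pow_left₀ hf0 hfb 2
            _ = ((1-1/c)*R/ε) ^ (-(β*(n:ℝ))*(2:ℝ)) := by
                rw [← Real.rpow_natCast (((1-1/c)*R/ε) ^ (-(β*(n:ℝ)))) 2,
                  ← Real.rpow_mul hrpos.le]
                norm_num
            _ = Fc * ε ^ (2*((N:ℝ)+Kμ-2)) := by
                rw [hβn]
                rw [show (1-1/c)*R/ε = ((1-1/c)*R) * ε⁻¹ by ring]
                rw [Real.mul_rpow (by positivity) (by positivity),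
                  Real.inv_rpow hε.le, ← Real.rpow_neg hε.le, hFcdef]
                rw [show -((N:ℝ)+Kμ-2)*2 = -(2*((N:ℝ)+Kμ-2)) by ring]
                rw [neg_neg]
        have hμx : μ x ≤ Mc * ε ^ γ := by
          have hxM : M < ‖x‖ := lt_of_lt_of_le hMlt hx
          have hxpos : (0:ℝ) < ‖x‖ := lt_trans hM hxM
          have h0 := hμbd x hxM
          have hxg : ‖x‖ ^ (-γ) ≤ 2 ^ |γ| * R ^ (-γ) * ε ^ γ := by
            have hRe : (R/ε) ^ (-γ) = R ^ (-γ) * ε ^ γ := by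
              rw [div_eq_mul_inv, Real.mul_rpow hR.le (by positivity),
                Real.inv_rpow hε.le, ← Real.rpow_neg hε.le, neg_neg]
            have h2Re : (2*R/ε) ^ (-γ) = 2 ^ (-γ) * (R ^ (-γ) * ε ^ γ) := by
              rw [show 2*R/ε = 2*(R/ε) by ring,
                Real.mul_rpow (by norm_num) (le_of_lt hεR), hRe]
            rcases le_or_gt 0 γ with hγ0 | hγ0
            · have hb : ‖x‖ ^ (-γ) ≤ (R/ε) ^ (-γ) :=
                Real.rpow_le_rpow_of_nonpos hεR hx (neg_nonpos.mpr hγ0)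
              have h21 : (1:ℝ) ≤ 2 ^ |γ| := by
                calc (1:ℝ) = (2:ℝ) ^ (0:ℝ) := (Real.rpow_zero 2).symm
                  _ ≤ 2 ^ |γ| := Real.rpow_le_rpow_of_exponent_le one_le_two (abs_nonneg γ)
              have hRεpos : (0:ℝ) ≤ R ^ (-γ) * ε ^ γ := by
                have := Real.rpow_nonneg hR.le (-γ)
                have := Real.rpow_nonneg hε.le γ
                positivity
              calc ‖x‖ ^ (-γ) ≤ R ^ (-γ) * ε ^ γ := by rw [← hRe]; exact hb
                _ = 1 * (R ^ (-γ) * ε ^ γ) := by ring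
                _ ≤ 2 ^ |γ| * (R ^ (-γ) * ε ^ γ) := mul_le_mul_of_nonneg_right h21 hRεpos
                _ = 2 ^ |γ| * R ^ (-γ) * ε ^ γ := by ring
            · have hb : ‖x‖ ^ (-γ) ≤ (2*R/ε) ^ (-γ) :=
                Real.rpow_le_rpow (norm_nonneg x) hx2 (by linarith)
              have habs : |γ| = -γ := abs_of_neg hγ0
              calc ‖x‖ ^ (-γ) ≤ (2*R/ε) ^ (-γ) := hb
                _ = 2 ^ |γ| * R ^ (-γ) * ε ^ γ := by rw [h2Re, habs]; ring
          have hdivC : C / ‖x‖ ^ γ = C * ‖x‖ ^ (-γ) := by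
            rw [Real.rpow_neg hxpos.le, div_eq_mul_inv]
          calc μ x ≤ C / ‖x‖ ^ γ := h0
            _ = C * ‖x‖ ^ (-γ) := hdivC
            _ ≤ (max C 1) * (2 ^ |γ| * R ^ (-γ) * ε ^ γ) := by
                apply mul_le_mul (le_max_left C 1) hxg (Real.rpow_nonneg hxpos.le _) hmaxC.le
            _ = Mc * ε ^ γ := by rw [hMcdef]; ring
        rw [hBdef]
        apply mul_le_mul _ hμx (hμ0 x) (by positivity)
        apply mul_le_mul h1 hf2 (sq_nonneg _)
        positivity
      · rw [hgrad2 x hx2]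
        simpa using Set.indicator_nonneg (fun _ _ => hBnonneg) x
    have hmeas : MeasurableSet s := Metric.isClosed_closedBall.measurableSet
    have hint : Integrable (s.indicator fun _ => Bval) := by
      refine ((integrableOn_const_iff (C := Bval)).mpr (Or.inr ?_)).integrable_indicator hmeas
      exact measure_closedBall_lt_top
    have hnn : (0 : EuclideanSpace ℝ (Fin N) → ℝ) ≤ᵐ[volume]
        fun x => ‖gradient θ x‖^2 * f x^2 * μ x :=
      Filter.Eventually.of_forall fun x =>
        mul_nonneg (mul_nonneg (sq_nonneg _) (sq_nonneg _)) (hμ0 x)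
    have hmono : ∫ x, ‖gradient θ x‖^2 * f x^2 * μ x ≤ ∫ x, s.indicator (fun _ => Bval) x :=
      integral_mono_of_nonneg hnn hint (Filter.Eventually.of_forall hpt)
    have hvol : (volume s).toReal = (2*R/ε)^N * vN := by
      rw [hs, Measure.addHaar_closedBall' volume 0 (by positivity)]
      rw [ENNReal.toReal_mul, ENNReal.toReal_ofReal (by positivity), finrank_euclideanSpace_fin]
    have hind : ∫ x, s.indicator (fun _ => Bval) x = (2*R/ε)^N * vN * Bval := by
      rw [integral_indicator_const Bval hmeas, smul_eq_mul, measureReal_def, hvol]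
    have hεpow : ε^(2:ℕ) * ε ^ (2*((N:ℝ)+Kμ-2)) * ε ^ γ / ε^(N:ℕ) =
        ε ^ (((N:ℝ)+Kμ-2)+Kμ+γ) := by
      rw [← Real.rpow_natCast ε 2, ← Real.rpow_natCast ε N,
        ← Real.rpow_add hε, ← Real.rpow_add hε, ← Real.rpow_sub hε]
      congr 1
      push_cast
      ring
    have hfinal : (2*R/ε)^N * vN * Bval = C' * ε ^ (((N:ℝ)+Kμ-2)+Kμ+γ) := by
      rw [hBdef, hC'def, div_pow (2*R) ε N]
      rw [show (2*R)^N / ε^N * vN * ((c₀*ε/R)^2 * (Fc * ε ^ (2*((N:ℝ)+Kμ-2))) * (Mc * ε ^ γ))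
          = c₀^2/R^2 * Fc * Mc * (2*R)^N * vN *
            (ε^(2:ℕ) * ε ^ (2*((N:ℝ)+Kμ-2)) * ε ^ γ / ε^(N:ℕ)) by ring]
      rw [hεpow]
    calc ∫ x, ‖gradient θ x‖^2 * f x^2 * μ x ≤ ∫ x, s.indicator (fun _ => Bval) x := hmono
      _ = (2*R/ε)^N * vN * Bval := hind
      _ = C' * ε ^ (((N:ℝ)+Kμ-2)+Kμ+γ) := hfinal
  · have h1 : Filter.Tendsto (fun ε:ℝ => ε ^ (((N:ℝ)+Kμ-2)+Kμ+γ))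
        (nhdsWithin 0 (Set.Ioi 0)) (nhds 0) := by
      have hct := (Real.continuousAt_rpow_const 0 (((N:ℝ)+Kμ-2)+Kμ+γ) (Or.inr hEpos.le)).tendsto
      rw [Real.zero_rpow hEpos.ne'] at hct
      exact hct.mono_left nhdsWithin_le_nhds
    simpa using h1.const_mul C'
end

section
/- The weight μ(x) = Π_{i=1}^n |x−a_i|^{−γ} e^{−δ Σ_j |x−a_j|^m} with δ ≥ 0, m ≤ 2, and 0 ≤ γ < N−2 satisfies: there exist constants K_μ ∈ R with K_μ > 2−N and C_μ ∈ R such that −Σ_{i=1}^n (β/|x−a_i|^2)[(x−a_i)·∇μ(x)/μ(x) − K_μ] ≤ C_μ for all x ∉ {a_1,...,a_n}, where β = (N+K_μ−2)/n. -/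
open Finset Real
open scoped RealInnerProductSpace

set_option maxHeartbeats 2000000

lemma rpow_two' {r : ℝ} : r ^ (2:ℝ) = r ^ 2 := by
  rw [show (2:ℝ) = ((2:ℕ):ℝ) by norm_num, rpow_natCast]

lemma aux_inv {θ r : ℝ} (hθ : 0 < θ) (hr : 0 < r) : 1/r ≤ θ*(1/r^2) + 1/(4*θ) := by
  have key : θ*(1/r^2) + 1/(4*θ) - 1/r = (2*θ - r)^2 / (4*θ*r^2) := by
    field_simp; ring
  nlinarith [sq_nonneg (2*θ - r),
    div_nonneg (sq_nonneg (2*θ - r)) (by positivity : (0:ℝ) ≤ 4*θ*r^2)]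

lemma aux_P {p : ℝ} (hp1 : -2 < p) (hp2 : p ≤ 0) {θ : ℝ} (hθ : 0 < θ) :
    ∃ C, 0 ≤ C ∧ ∀ r : ℝ, 0 < r → r ^ p ≤ θ*(1/r^2) + C := by
  set r₀ : ℝ := θ ^ (1/(p+2)) with hr₀def
  have hp2' : 0 < p + 2 := by linarith
  have hr₀ : 0 < r₀ := rpow_pos_of_pos hθ _
  refine ⟨r₀ ^ p, (rpow_pos_of_pos hr₀ p).le, fun r hr => ?_⟩
  rcases le_total r r₀ with h | h
  · have h1 : r ^ (p+2) ≤ θ := by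
      calc r ^ (p+2) ≤ r₀ ^ (p+2) := rpow_le_rpow hr.le h hp2'.le
        _ = θ := by
          rw [hr₀def, ← Real.rpow_mul hθ.le, one_div, inv_mul_cancel₀ hp2'.ne', rpow_one]
    have h2 : r ^ p = r ^ (p+2) * (1/r^2) := by
      rw [rpow_add hr, rpow_two']
      field_simp
    rw [h2]
    have h3 : r ^ (p+2) * (1/r^2) ≤ θ * (1/r^2) :=
      mul_le_mul_of_nonneg_right h1 (by positivity)
    nlinarith [rpow_pos_of_pos hr₀ p]
  · have : r ^ p ≤ r₀ ^ p := rpow_le_rpow_of_nonpos hr₀ h hp2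
    nlinarith [mul_pos hθ (show (0:ℝ) < 1/r^2 by positivity)]

lemma aux_lin {A θ : ℝ} (hA : 0 ≤ A) (hθ : 0 < θ) :
    ∃ C, 0 ≤ C ∧ ∀ r : ℝ, 0 < r → A*(1/r) ≤ θ*(1/r^2) + C := by
  have hθ₁ : 0 < θ/(A+1) := by positivity
  refine ⟨A*(1/(4*(θ/(A+1)))), by positivity, fun r hr => ?_⟩
  have h := aux_inv hθ₁ hr
  have h2 : A*(1/r) ≤ A*((θ/(A+1))*(1/r^2) + 1/(4*(θ/(A+1)))) :=
    mul_le_mul_of_nonneg_left h hA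
  have h3 : A*(θ/(A+1)) ≤ θ := by
    rw [mul_div_assoc']
    rw [div_le_iff₀ (by linarith)]
    nlinarith
  have h4 : (0:ℝ) < 1/r^2 := by positivity
  nlinarith [mul_le_mul_of_nonneg_right h3 h4.le]

lemma aux_A1 {γ' d θ : ℝ} (hγ' : 0 ≤ γ') (hd : 0 < d) (hθ : 0 < θ) :
    ∃ C, 0 ≤ C ∧ ∀ r s : ℝ, 0 < r → 0 < s → d ≤ r + s →
      γ'*(1/(r*s)) ≤ θ*(1/r^2) + θ*(1/s^2) + C := by
  obtain ⟨C, hC0, hC⟩ := aux_lin (show (0:ℝ) ≤ 2*γ'/d by positivity) hθ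
  refine ⟨2*C, by positivity, fun r s hr hs hd' => ?_⟩
  have key : γ'*(1/(r*s)) ≤ (2*γ'/d)*(1/r) + (2*γ'/d)*(1/s) := by
    rcases le_total r s with h | h
    · -- s ≥ d/2
      have hs2 : 1/s ≤ 2/d := by rw [div_le_div_iff₀ hs hd]; linarith
      have : γ'*(1/(r*s)) ≤ (2*γ'/d)*(1/r) := by
        rw [show γ'*(1/(r*s)) = (γ'*(1/s))*(1/r) by ring]
        apply mul_le_mul_of_nonneg_right _ (by positivity)
        calc γ'*(1/s) ≤ γ'*(2/d) := mul_le_mul_of_nonneg_left hs2 hγ'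
          _ = 2*γ'/d := by ring
      nlinarith [mul_nonneg (show (0:ℝ) ≤ 2*γ'/d by positivity) (show (0:ℝ) ≤ 1/s by positivity)]
    · have hr2 : 1/r ≤ 2/d := by rw [div_le_div_iff₀ hr hd]; linarith
      have : γ'*(1/(r*s)) ≤ (2*γ'/d)*(1/s) := by
        rw [show γ'*(1/(r*s)) = (γ'*(1/r))*(1/s) by ring]
        apply mul_le_mul_of_nonneg_right _ (by positivity)
        calc γ'*(1/r) ≤ γ'*(2/d) := mul_le_mul_of_nonneg_left hr2 hγ'
          _ = 2*γ'/d := by ring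
      nlinarith [mul_nonneg (show (0:ℝ) ≤ 2*γ'/d by positivity) (show (0:ℝ) ≤ 1/r by positivity)]
  have h1 := hC r hr
  have h2 := hC s hs
  linarith


lemma aux_A2 {c E d D θ m : ℝ} (hc : 0 ≤ c) (hE : 0 < c → 0 < E) (hE0 : 0 ≤ E)
    (hd : 0 < d) (hD : 0 ≤ D) (hθ : 0 < θ) (hm : m ≤ 2) :
    ∃ C, 0 ≤ C ∧ ∀ r s : ℝ, 0 < r → 0 < s → d ≤ r + s → s ≤ r + D →
      c * s^(m-1) * (1/r) ≤ θ*(1/r^2) + θ*(1/s^2) + E * s^(m-2) + C := by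
  rcases eq_or_lt_of_le hc with hc0 | hc0
  · refine ⟨0, le_refl _, fun r s hr hs h1 h2 => ?_⟩
    rw [← hc0]
    have h3 : (0:ℝ) ≤ E * s^(m-2) := mul_nonneg hE0 (rpow_pos_of_pos hs _).le
    have h4 : (0:ℝ) ≤ θ*(1/r^2) := by positivity
    have h5 : (0:ℝ) ≤ θ*(1/s^2) := by positivity
    have h6 : (0:ℝ) < s^(m-1) := rpow_pos_of_pos hs _
    nlinarith
  have hE' := hE hc0
  rcases le_or_gt m 0 with hm0 | hm0
  · -- m ≤ 0
    set θ₁ : ℝ := E*d/(2*c) with hθ₁def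
    have hθ₁ : 0 < θ₁ := by positivity
    obtain ⟨C₂, hC₂0, hC₂⟩ := aux_lin (show (0:ℝ) ≤ c*(d/2)^(m-1) by positivity) hθ
    refine ⟨c*(2/d)*θ₁^(m-1) + C₂, by positivity, fun r s hr hs h1 h2 => ?_⟩
    have hm1 : m - 1 ≤ 0 := by linarith
    have hs1 : (0:ℝ) < s^(m-1) := rpow_pos_of_pos hs _
    have star : s^(m-1)*(1/r) ≤ (2/d)*s^(m-1) + (d/2)^(m-1)*(1/r) := by
      rcases le_total s (d/2) with h | h
      · have hrd : d/2 ≤ r := by linarith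
        have hr2 : 1/r ≤ 2/d := by rw [div_le_div_iff₀ hr hd]; linarith
        nlinarith [mul_pos (rpow_pos_of_pos (show (0:ℝ) < d/2 by positivity) (m-1))
          (show (0:ℝ) < 1/r by positivity)]
      · have : s^(m-1) ≤ (d/2)^(m-1) :=
          rpow_le_rpow_of_nonpos (by positivity) h hm1
        nlinarith [mul_pos (show (0:ℝ) < 2/d by positivity) hs1,
          (show (0:ℝ) < 1/r by positivity)]
    have step2 : s^(m-1) ≤ θ₁*s^(m-2) + θ₁^(m-1) := by
      rcases le_total s θ₁ with h | h
      · have hsm : s^(m-1) = s^(m-2) * s := by rw [← rpow_add_one hs.ne']; ring_nf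
        have : s^(m-2) * s ≤ s^(m-2) * θ₁ :=
          mul_le_mul_of_nonneg_left h (rpow_pos_of_pos hs _).le
        have h2' : (0:ℝ) < θ₁^(m-1) := rpow_pos_of_pos hθ₁ _
        rw [hsm]; linarith [this]
      · have : s^(m-1) ≤ θ₁^(m-1) := rpow_le_rpow_of_nonpos hθ₁ h hm1
        nlinarith [mul_pos hθ₁ (rpow_pos_of_pos hs (m-2))]
    -- combine
    have comb1 : c * s^(m-1) * (1/r) ≤ c*((2/d)*s^(m-1)) + c*((d/2)^(m-1)*(1/r)) := by
      have := mul_le_mul_of_nonneg_left star hc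
      calc c * s^(m-1) * (1/r) = c * (s^(m-1)*(1/r)) := by ring
        _ ≤ c * ((2/d)*s^(m-1) + (d/2)^(m-1)*(1/r)) := this
        _ = c*((2/d)*s^(m-1)) + c*((d/2)^(m-1)*(1/r)) := by ring
    have comb2 : c*((2/d)*s^(m-1)) ≤ E*s^(m-2) + c*(2/d)*θ₁^(m-1) := by
      have h0 : (0:ℝ) ≤ c*(2/d) := by positivity
      have := mul_le_mul_of_nonneg_left step2 h0
      have hEe : c*(2/d)*θ₁ = E := by rw [hθ₁def]; field_simp
      calc c*((2/d)*s^(m-1)) = (c*(2/d)) * s^(m-1) := by ring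
        _ ≤ (c*(2/d)) * (θ₁*s^(m-2) + θ₁^(m-1)) := this
        _ = (c*(2/d)*θ₁)*s^(m-2) + c*(2/d)*θ₁^(m-1) := by ring
        _ = E*s^(m-2) + c*(2/d)*θ₁^(m-1) := by rw [hEe]
    have comb3 : c*((d/2)^(m-1)*(1/r)) ≤ θ*(1/r^2) + C₂ := by
      have := hC₂ r hr
      calc c*((d/2)^(m-1)*(1/r)) = (c*(d/2)^(m-1))*(1/r) := by ring
        _ ≤ θ*(1/r^2) + C₂ := this
    have hpos : (0:ℝ) ≤ θ*(1/s^2) := by positivity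
    linarith
  · -- 0 < m
    obtain ⟨P, hP0, hP⟩ := aux_P (show (-2:ℝ) < m - 2 by linarith)
      (show m - 2 ≤ 0 by linarith) (show (0:ℝ) < θ/(2*c) by positivity)
    obtain ⟨C₂, hC₂0, hC₂⟩ := aux_lin (show (0:ℝ) ≤ c*P*D by positivity)
      (show (0:ℝ) < θ/2 by positivity)
    refine ⟨c*P + C₂, by positivity, fun r s hr hs h1 h2 => ?_⟩
    have hsm2 : s^(m-1) = s^(m-2) * s := by rw [← rpow_add_one hs.ne']; ring_nf
    have hbound := hP s hs
    have hsr : 0 < s/r := by positivity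
    have key : c * s^(m-1) * (1/r) = (c*s^(m-2)) * (s/r) := by
      rw [hsm2]; field_simp
    have step : (c*s^(m-2)) * (s/r) ≤ (c*((θ/(2*c))*(1/s^2) + P)) * (s/r) :=
      mul_le_mul_of_nonneg_right (mul_le_mul_of_nonneg_left hbound hc) hsr.le
    have expand : (c*((θ/(2*c))*(1/s^2) + P)) * (s/r)
        = (θ/2)*(1/(s*r)) + (c*P)*(s/r) := by
      field_simp
    have amgm : (θ/2)*(1/(s*r)) ≤ (θ/4)*(1/r^2) + (θ/4)*(1/s^2) := by
      have e1 : 1/(s*r) = (1/r)*(1/s) := by ring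
      have e2 : 1/r^2 = (1/r)^2 := by ring
      have e3 : 1/s^2 = (1/s)^2 := by ring
      rw [e1, e2, e3]
      nlinarith [sq_nonneg (1/r - 1/s), hθ.le]
    have hsr' : s/r ≤ 1 + D*(1/r) := by
      rw [div_le_iff₀ hr]
      have e : (1 + D*(1/r))*r = r + D := by field_simp
      rw [e]; exact h2
    have hsD : (c*P)*(s/r) ≤ c*P + (c*P*D)*(1/r) := by
      have h0 : (0:ℝ) ≤ c*P := by positivity
      have := mul_le_mul_of_nonneg_left hsr' h0
      calc (c*P)*(s/r) ≤ (c*P)*(1 + D*(1/r)) := this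
        _ = c*P + (c*P*D)*(1/r) := by ring
    have hlin := hC₂ r hr
    have hEs : (0:ℝ) ≤ E * s^(m-2) := mul_nonneg hE0 (rpow_pos_of_pos hs _).le
    have h1r : (0:ℝ) ≤ 1/r^2 := by positivity
    have h1s : (0:ℝ) ≤ 1/s^2 := by positivity
    rw [key]
    have p1 : (0:ℝ) ≤ θ*(1/r^2) := by positivity
    have p2 : (0:ℝ) ≤ θ*(1/s^2) := by positivity
    linarith [step, expand, amgm, hsD, hlin, hEs, p1, p2]

lemma aux_D {δ m ε : ℝ} (hδ : 0 ≤ δ) (hm : m ≤ 2) (hε : 0 < ε) :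
    ∃ C, 0 ≤ C ∧ ∀ r : ℝ, 0 < r → δ*(m+|m|)*r^(m-2) ≤ (ε/2)*(1/r^2) + C := by
  rcases le_or_gt m 0 with h | h
  · refine ⟨0, le_rfl, fun r hr => ?_⟩
    have : m + |m| = 0 := by rw [abs_of_nonpos h]; ring
    rw [this]
    have : (0:ℝ) ≤ (ε/2)*(1/r^2) := by positivity
    simpa using this
  · have habs : |m| = m := abs_of_pos h
    rcases eq_or_lt_of_le hδ with h0 | h0
    · refine ⟨0, le_rfl, fun r hr => ?_⟩
      rw [← h0]
      have : (0:ℝ) ≤ (ε/2)*(1/r^2) := by positivity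
      simpa using this
    · have hc2 : 0 < δ*(m+|m|) := by rw [habs]; positivity
      obtain ⟨P, hP0, hP⟩ := aux_P (show (-2:ℝ) < m-2 by linarith)
        (show m-2 ≤ 0 by linarith) (show (0:ℝ) < (ε/2)/(δ*(m+|m|)) by positivity)
      refine ⟨δ*(m+|m|)*P, by positivity, fun r hr => ?_⟩
      have := mul_le_mul_of_nonneg_left (hP r hr) hc2.le
      have e : δ*(m+|m|) * ((ε/2)/(δ*(m+|m|))*(1/r^2) + P)
          = (ε/2)*(1/r^2) + δ*(m+|m|)*P := by
        field_simp
      linarith [e ▸ this]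

lemma grad_key {N n : ℕ} (a : Fin n → EuclideanSpace ℝ (Fin N)) (γ δ m : ℝ)
    (μ : EuclideanSpace ℝ (Fin N) → ℝ)
    (hμ : ∀ x, μ x = (∏ i : Fin n, ‖x - a i‖ ^ (-γ)) *
        Real.exp (-δ * ∑ j : Fin n, ‖x - a j‖ ^ m))
    (x : EuclideanSpace ℝ (Fin N)) (hx : ∀ i, x ≠ a i) (i : Fin n) :
    ⟪x - a i, gradient μ x⟫ / μ x =
      ∑ j : Fin n, (-(γ / ‖x - a j‖^2 + δ * m * ‖x - a j‖ ^ (m-2))) *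
        ⟪x - a i, x - a j⟫ := by
  classical
  set S : Set (EuclideanSpace ℝ (Fin N)) := (Set.range a)ᶜ with hSdef
  have hS : IsOpen S := (Set.finite_range a).isClosed.isOpen_compl
  have hxS : x ∈ S := by
    intro hmem
    obtain ⟨j, hj⟩ := hmem
    exact hx j hj.symm
  have hpos : ∀ (y : EuclideanSpace ℝ (Fin N)), y ∈ S → ∀ j, (0:ℝ) < ‖y - a j‖ := by
    intro y hy j
    rw [norm_pos_iff, sub_ne_zero]
    intro h
    exact hy ⟨j, h.symm⟩
  set F : EuclideanSpace ℝ (Fin N) → ℝ := fun y => ∑ j : Fin n,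
    (-(γ/2) * Real.log (‖y - a j‖^2) - δ * ((‖y - a j‖^2 : ℝ)^(m/2 : ℝ))) with hFdef
  have hFeq : ∀ y ∈ S, μ y = Real.exp (F y) := by
    intro y hy
    have hyj := hpos y hy
    have h1 : ∀ j : Fin n, ‖y - a j‖ ^ (-γ) =
        Real.exp (-(γ/2) * Real.log (‖y - a j‖^2)) := by
      intro j
      rw [Real.rpow_def_of_pos (hyj j), Real.log_pow]
      norm_num
      ring_nf
    have h2 : ∀ j : Fin n, ((‖y - a j‖^2 : ℝ))^(m/2 : ℝ) = ‖y - a j‖ ^ m := by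
      intro j
      rw [← Real.rpow_natCast ‖y - a j‖ 2, ← Real.rpow_mul (norm_nonneg _)]
      congr 1
      ring
    rw [hμ y]
    simp only [h1]
    rw [← Real.exp_sum, ← Real.exp_add]
    congr 1
    rw [hFdef]
    simp only [h2]
    rw [Finset.sum_sub_distrib, Finset.mul_sum]
    congr 1
    rw [← Finset.sum_neg_distrib]
    apply Finset.sum_congr rfl
    intro j _
    ring
  set L : EuclideanSpace ℝ (Fin N) →L[ℝ] ℝ := ∑ j : Fin n,
    (-(γ/2) * (‖x - a j‖^2 : ℝ)⁻¹ - δ * ((m/2) * (‖x - a j‖^2 : ℝ)^(m/2 - 1 : ℝ))) •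
      (2 • innerSL ℝ (x - a j)) with hLdef
  have hF : HasFDerivAt F L x := by
    apply HasFDerivAt.fun_sum
    intro j _
    have ht : (0:ℝ) < ‖x - a j‖^2 := pow_pos (hpos x hxS j) 2
    have hq : HasFDerivAt (fun y : EuclideanSpace ℝ (Fin N) => ‖y - a j‖^2)
        (2 • innerSL ℝ (x - a j)) x := by
      have h := ((hasFDerivAt_id x).sub_const (a j)).norm_sq
      simpa using h
    have hg : HasDerivAt (fun t : ℝ => -(γ/2) * Real.log t - δ * t^(m/2 : ℝ))
        (-(γ/2) * (‖x - a j‖^2 : ℝ)⁻¹ - δ * ((m/2) * (‖x - a j‖^2 : ℝ)^(m/2 - 1 : ℝ)))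
        (‖x - a j‖^2) := by
      exact ((Real.hasDerivAt_log ht.ne').const_mul (-(γ/2))).sub
        ((Real.hasDerivAt_rpow_const (Or.inl ht.ne')).const_mul δ)
    exact hg.comp_hasFDerivAt x hq
  have hμx : HasFDerivAt μ (Real.exp (F x) • L) x := by
    have hexp : HasFDerivAt (fun y => Real.exp (F y)) (Real.exp (F x) • L) x :=
      (Real.hasDerivAt_exp (F x)).comp_hasFDerivAt x hF
    apply hexp.congr_of_eventuallyEq
    exact Filter.eventuallyEq_of_mem (hS.mem_nhds hxS) hFeq
  have hgrad : ⟪x - a i, gradient μ x⟫ = (Real.exp (F x) • L) (x - a i) := by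
    rw [real_inner_comm]
    rw [show gradient μ x =
      (InnerProductSpace.toDual ℝ (EuclideanSpace ℝ (Fin N))).symm (fderiv ℝ μ x) from rfl]
    rw [← InnerProductSpace.toDual_apply_apply]
    rw [LinearIsometryEquiv.apply_symm_apply]
    rw [hμx.fderiv]
  rw [hgrad, hFeq x hxS]
  rw [ContinuousLinearMap.smul_apply]
  rw [smul_eq_mul, mul_comm, mul_div_assoc, div_self (Real.exp_pos _).ne', mul_one]
  rw [hLdef, ContinuousLinearMap.sum_apply]
  apply Finset.sum_congr rfl
  intro j _
  rw [ContinuousLinearMap.smul_apply, ContinuousLinearMap.smul_apply, innerSL_apply_apply]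
  have ht : (0:ℝ) < ‖x - a j‖^2 := pow_pos (hpos x hxS j) 2
  have hrm : ((‖x - a j‖^2 : ℝ))^(m/2 - 1 : ℝ) = ‖x - a j‖ ^ (m - 2) := by
    rw [← Real.rpow_natCast ‖x - a j‖ 2, ← Real.rpow_mul (norm_nonneg _)]
    congr 1
    ring
  rw [hrm]
  rw [nsmul_eq_mul]
  rw [real_inner_comm (x - a j) (x - a i)]
  generalize (inner ℝ (x - a i) (x - a j) : ℝ) = In
  field_simp
  ring

/-- The weight `μ(x) = ∏ᵢ ‖x−aᵢ‖^{−γ} e^{−δ ∑ⱼ ‖x−aⱼ‖^m}` with `δ ≥ 0`, `m ≤ 2`,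
`0 ≤ γ < N−2` satisfies hypothesis `H₂)`: there are `K_μ > 2−N` and `C_μ` such that
`−∑ᵢ (β/‖x−aᵢ‖²)[(x−aᵢ)·∇μ/μ − K_μ] ≤ C_μ` away from the poles, `β = (N+K_μ−2)/n`. -/
theorem example_weight_satisfies_H2 {N n : ℕ} (hN : 3 ≤ N) (hn : 2 ≤ n)
    (a : Fin n → EuclideanSpace ℝ (Fin N)) (ha : Function.Injective a)
    (γ δ m : ℝ) (hδ : 0 ≤ δ) (hm : m ≤ 2) (hγ0 : 0 ≤ γ) (hγ : γ < (N : ℝ) - 2)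
    (μ : EuclideanSpace ℝ (Fin N) → ℝ)
    (hμ : ∀ x, μ x = (∏ i : Fin n, ‖x - a i‖ ^ (-γ)) *
        Real.exp (-δ * ∑ j : Fin n, ‖x - a j‖ ^ m)) :
    ∃ Kμ Cμ : ℝ, 2 - (N : ℝ) < Kμ ∧
      ∀ x : EuclideanSpace ℝ (Fin N), (∀ i, x ≠ a i) →
        -∑ i : Fin n,
            ((((N : ℝ) + Kμ - 2) / n) / ‖x - a i‖ ^ 2) *
              (⟪x - a i, gradient μ x⟫ / μ x - Kμ) ≤ Cμ := by
  classical
  have hn0 : (0:ℝ) < n := by positivity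
  have hn2 : (2:ℝ) ≤ n := by exact_mod_cast hn
  -- constants
  set ε : ℝ := ((N:ℝ) - 2 - γ)/2 with hεdef
  have hε : 0 < ε := by simp only [hεdef]; linarith
  set Kμ : ℝ := (2 - (N:ℝ) - γ)/2 with hKdef
  set β : ℝ := ε/n with hβdef
  have hβ : 0 < β := by positivity
  have hβ0eq : ((N:ℝ)+Kμ-2)/(n:ℝ) = β := by
    rw [hβdef, hεdef, hKdef]; ring
  have hKγ : Kμ + γ = -ε := by rw [hKdef, hεdef]; ring
  -- minimum distance d
  obtain ⟨d, hd0, hd⟩ : ∃ d : ℝ, 0 < d ∧ ∀ i j : Fin n, i ≠ j → d ≤ ‖a i - a j‖ := by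
    set T := (Finset.univ.offDiag).image (fun p : Fin n × Fin n => ‖a p.1 - a p.2‖) with hT
    have h01 : ((⟨0, by omega⟩ : Fin n), (⟨1, by omega⟩ : Fin n)) ∈ Finset.univ.offDiag := by
      rw [Finset.mem_offDiag]
      exact ⟨mem_univ _, mem_univ _, by simp [Fin.ext_iff]⟩
    have hTne : T.Nonempty := ⟨_, Finset.mem_image.mpr ⟨_, h01, rfl⟩⟩
    refine ⟨T.min' hTne, ?_, ?_⟩
    · obtain ⟨p, hp, hpe⟩ := Finset.mem_image.mp (T.min'_mem hTne)
      rw [← hpe, norm_pos_iff, sub_ne_zero]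
      exact fun h => (Finset.mem_offDiag.mp hp).2.2 (ha h)
    · intro i j hij
      exact T.min'_le _ (Finset.mem_image.mpr
        ⟨(i,j), Finset.mem_offDiag.mpr ⟨mem_univ _, mem_univ _, hij⟩, rfl⟩)
  -- maximum distance D
  set D : ℝ := ∑ i : Fin n, ∑ j : Fin n, ‖a i - a j‖ with hDdef
  have hD0 : 0 ≤ D := by positivity
  have hDij : ∀ i j : Fin n, ‖a i - a j‖ ≤ D := by
    intro i j
    calc ‖a i - a j‖ ≤ ∑ j' : Fin n, ‖a i - a j'‖ :=
          Finset.single_le_sum (f := fun j' => ‖a i - a j'‖)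
            (fun _ _ => norm_nonneg _) (mem_univ j)
      _ ≤ D := Finset.single_le_sum
          (f := fun i' => ∑ j' : Fin n, ‖a i' - a j'‖)
          (fun _ _ => by positivity) (mem_univ i)
  -- more constants
  set c : ℝ := δ * |m| with hcdef
  have hc0 : 0 ≤ c := by positivity
  set E : ℝ := c/n with hEdef
  have hE0 : 0 ≤ E := by positivity
  have hEpos : 0 < c → 0 < E := fun h => by rw [hEdef]; positivity
  have hnE : (n:ℝ) * E = c := by rw [hEdef]; field_simp
  set θp : ℝ := ε/(16*n) with hθpdef
  have hθp : 0 < θp := by rw [hθpdef]; positivity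
  obtain ⟨CA1, hCA10, hCA1⟩ := aux_A1 (γ' := γ) hγ0 hd0 hθp
  obtain ⟨CA2, hCA20, hCA2⟩ := aux_A2 (D := D) (m := m) hc0 hEpos hE0 hd0 hD0 hθp hm
  obtain ⟨C₂, hC₂0, hC₂⟩ := aux_D (m := m) hδ hm hε
  set CA : ℝ := CA1 + CA2 with hCAdef
  have hCA0 : 0 ≤ CA := by positivity
  refine ⟨Kμ, β*((n:ℝ)*((n:ℝ)-1)*CA + (n:ℝ)*C₂), by rw [hKdef]; linarith, ?_⟩
  intro x hx
  have hRp : ∀ j, (0:ℝ) < ‖x - a j‖ := by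
    intro j; rw [norm_pos_iff, sub_ne_zero]; exact hx j
  have hds : ∀ i j : Fin n, i ≠ j → d ≤ ‖x - a i‖ + ‖x - a j‖ := by
    intro i j hij
    calc d ≤ ‖a i - a j‖ := hd i j hij
      _ = ‖(a i - x) + (x - a j)‖ := by abel_nf
      _ ≤ ‖a i - x‖ + ‖x - a j‖ := norm_add_le _ _
      _ = ‖x - a i‖ + ‖x - a j‖ := by rw [norm_sub_rev]
  have hDs : ∀ i j : Fin n, ‖x - a j‖ ≤ ‖x - a i‖ + D := by
    intro i j
    calc ‖x - a j‖ = ‖(x - a i) + (a i - a j)‖ := by abel_nf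
      _ ≤ ‖x - a i‖ + ‖a i - a j‖ := norm_add_le _ _
      _ ≤ ‖x - a i‖ + D := by linarith [hDij i j]
  -- step A : rewrite the goal
  have goal_eq : -∑ i : Fin n,
        ((((N : ℝ) + Kμ - 2) / n) / ‖x - a i‖ ^ 2) *
          (⟪x - a i, gradient μ x⟫ / μ x - Kμ)
      = ∑ i : Fin n, β * ((1/‖x - a i‖^2) *
          (Kμ + ∑ j : Fin n, (γ/‖x - a j‖^2 + δ*m*‖x - a j‖^(m-2)) *
            ⟪x - a i, x - a j⟫)) := by
    rw [← Finset.sum_neg_distrib]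
    refine Finset.sum_congr rfl (fun i _ => ?_)
    rw [grad_key a γ δ m μ hμ x hx i, hβ0eq]
    simp only [neg_mul]
    rw [Finset.sum_neg_distrib]
    ring
  rw [goal_eq]
  -- per-pair bound
  have pair : ∀ i j : Fin n, j ≠ i →
      ((γ/‖x - a j‖^2 + δ*m*‖x - a j‖^(m-2)) * ⟪x - a i, x - a j⟫) * (1/‖x - a i‖^2)
        ≤ (2*θp*(1/‖x - a i‖^2) + CA) + (2*θp*(1/‖x - a j‖^2) + E*‖x - a j‖^(m-2)) := by
    intro i j hji
    have hri := hRp i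
    have hrj := hRp j
    have hWabs : |γ/‖x - a j‖^2 + δ*m*‖x - a j‖^(m-2)|
        ≤ γ*(1/‖x - a j‖^2) + c*‖x - a j‖^(m-2) := by
      have h1 : |γ/‖x - a j‖^2| = γ*(1/‖x - a j‖^2) := by
        rw [abs_of_nonneg (by positivity)]; ring
      have h2 : |δ*m*‖x - a j‖^(m-2)| = c*‖x - a j‖^(m-2) := by
        rw [abs_mul, abs_mul, abs_of_nonneg hδ,
          abs_of_nonneg (Real.rpow_pos_of_pos hrj _).le, hcdef]
      calc |γ/‖x - a j‖^2 + δ*m*‖x - a j‖^(m-2)|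
          ≤ |γ/‖x - a j‖^2| + |δ*m*‖x - a j‖^(m-2)| := abs_add_le _ _
        _ = γ*(1/‖x - a j‖^2) + c*‖x - a j‖^(m-2) := by rw [h1, h2]
    have hPabs : |⟪x - a i, x - a j⟫| ≤ ‖x - a i‖ * ‖x - a j‖ := abs_real_inner_le_norm _ _
    have step1 : ((γ/‖x - a j‖^2 + δ*m*‖x - a j‖^(m-2)) * ⟪x - a i, x - a j⟫) * (1/‖x - a i‖^2)
        ≤ ((γ*(1/‖x - a j‖^2) + c*‖x - a j‖^(m-2)) * (‖x - a i‖ * ‖x - a j‖)) * (1/‖x - a i‖^2) := by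
      apply mul_le_mul_of_nonneg_right _ (by positivity)
      calc (γ/‖x - a j‖^2 + δ*m*‖x - a j‖^(m-2)) * ⟪x - a i, x - a j⟫
          ≤ |(γ/‖x - a j‖^2 + δ*m*‖x - a j‖^(m-2)) * ⟪x - a i, x - a j⟫| := le_abs_self _
        _ = |γ/‖x - a j‖^2 + δ*m*‖x - a j‖^(m-2)| * |⟪x - a i, x - a j⟫| := abs_mul _ _
        _ ≤ (γ*(1/‖x - a j‖^2) + c*‖x - a j‖^(m-2)) * (‖x - a i‖ * ‖x - a j‖) := by
            apply mul_le_mul hWabs hPabs (abs_nonneg _)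
            positivity
    have step2 : ((γ*(1/‖x - a j‖^2) + c*‖x - a j‖^(m-2)) * (‖x - a i‖ * ‖x - a j‖)) * (1/‖x - a i‖^2)
        = γ*(1/(‖x - a i‖*‖x - a j‖)) + c*‖x - a j‖^(m-1)*(1/‖x - a i‖) := by
      have hm1 : ‖x - a j‖^(m-1) = ‖x - a j‖^(m-2) * ‖x - a j‖ := by
        rw [← Real.rpow_add_one hrj.ne']; ring_nf
      rw [hm1]; field_simp
    have h1 := hCA1 _ _ hri hrj (hds i j (fun h => hji h.symm))
    have h2 := hCA2 _ _ hri hrj (hds i j (fun h => hji h.symm)) (hDs i j)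
    calc ((γ/‖x - a j‖^2 + δ*m*‖x - a j‖^(m-2)) * ⟪x - a i, x - a j⟫) * (1/‖x - a i‖^2)
        ≤ γ*(1/(‖x - a i‖*‖x - a j‖)) + c*‖x - a j‖^(m-1)*(1/‖x - a i‖) := by
          rw [← step2]; exact step1
      _ ≤ (θp*(1/‖x - a i‖^2) + θp*(1/‖x - a j‖^2) + CA1)
          + (θp*(1/‖x - a i‖^2) + θp*(1/‖x - a j‖^2) + E*‖x - a j‖^(m-2) + CA2) :=
          add_le_add h1 h2
      _ = (2*θp*(1/‖x - a i‖^2) + CA) + (2*θp*(1/‖x - a j‖^2) + E*‖x - a j‖^(m-2)) := by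
          rw [hCAdef]; ring
  -- abbreviations
  set S : ℝ := ∑ j : Fin n, 1/‖x - a j‖^2 with hSdef
  set Tm : ℝ := ∑ j : Fin n, ‖x - a j‖^(m-2) with hTmdef
  set Q : ℝ := ∑ j : Fin n, (2*θp*(1/‖x - a j‖^2) + E*‖x - a j‖^(m-2)) with hQdef
  have hS0 : 0 ≤ S := by rw [hSdef]; positivity
  have hQ : Q = 2*θp*S + E*Tm := by
    rw [hQdef, Finset.sum_add_distrib, hSdef, hTmdef, ← Finset.mul_sum, ← Finset.mul_sum]
  have hcast : ((n-1:ℕ):ℝ) = (n:ℝ)-1 := by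
    have h1 : 1 ≤ n := by omega
    rw [Nat.cast_sub h1, Nat.cast_one]
  -- per-i bound
  have per_i : ∀ i : Fin n, (1/‖x - a i‖^2) *
      (Kμ + ∑ j : Fin n, (γ/‖x - a j‖^2 + δ*m*‖x - a j‖^(m-2)) * ⟪x - a i, x - a j⟫)
      ≤ (Kμ+γ)*(1/‖x - a i‖^2) + δ*m*‖x - a i‖^(m-2)
        + (((n:ℝ)-1)*(2*θp*(1/‖x - a i‖^2) + CA) + Q) := by
    intro i
    have hri := hRp i
    have hPii : ⟪x - a i, x - a i⟫ = ‖x - a i‖^2 := real_inner_self_eq_norm_sq _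
    have hsplit := (Finset.add_sum_erase Finset.univ
      (fun j => (γ/‖x - a j‖^2 + δ*m*‖x - a j‖^(m-2)) * ⟪x - a i, x - a j⟫)
      (mem_univ i)).symm
    rw [hPii] at hsplit
    rw [hsplit]
    have halg : ∀ R2 A B : ℝ, R2 ≠ 0 →
        (1/R2) * (Kμ + ((γ/R2 + δ*m*A) * R2 + B))
        = (Kμ+γ)*(1/R2) + δ*m*A + B*(1/R2) := by
      intro R2 A B hne
      field_simp
      ring
    rw [halg _ _ _ (show (‖x - a i‖^2 : ℝ) ≠ 0 by positivity), Finset.sum_mul]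
    have hb1 : ∑ j ∈ Finset.univ.erase i,
        ((γ/‖x - a j‖^2 + δ*m*‖x - a j‖^(m-2)) * ⟪x - a i, x - a j⟫) * (1/‖x - a i‖^2)
        ≤ ∑ j ∈ Finset.univ.erase i,
          ((2*θp*(1/‖x - a i‖^2) + CA) + (2*θp*(1/‖x - a j‖^2) + E*‖x - a j‖^(m-2))) :=
      Finset.sum_le_sum (fun j hj => pair i j (Finset.mem_erase.mp hj).1)
    have hb2 : ∑ j ∈ Finset.univ.erase i,
        ((2*θp*(1/‖x - a i‖^2) + CA) + (2*θp*(1/‖x - a j‖^2) + E*‖x - a j‖^(m-2)))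
        ≤ ((n:ℝ)-1)*(2*θp*(1/‖x - a i‖^2) + CA) + Q := by
      rw [Finset.sum_add_distrib, Finset.sum_const, Finset.card_erase_of_mem (mem_univ i),
        card_univ, Fintype.card_fin, nsmul_eq_mul, hcast]
      have : ∑ j ∈ Finset.univ.erase i, (2*θp*(1/‖x - a j‖^2) + E*‖x - a j‖^(m-2)) ≤ Q := by
        rw [hQdef]
        apply Finset.sum_le_sum_of_subset_of_nonneg (Finset.erase_subset _ _)
        intro j _ _
        have := hRp j
        positivity
      linarith
    linarith
  -- sum up
  have hsum_le : ∑ i : Fin n, β * ((1/‖x - a i‖^2) *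
      (Kμ + ∑ j : Fin n, (γ/‖x - a j‖^2 + δ*m*‖x - a j‖^(m-2)) * ⟪x - a i, x - a j⟫))
      ≤ β * ∑ i : Fin n, ((Kμ+γ)*(1/‖x - a i‖^2) + δ*m*‖x - a i‖^(m-2)
        + (((n:ℝ)-1)*(2*θp*(1/‖x - a i‖^2) + CA) + Q)) := by
    rw [Finset.mul_sum]
    exact Finset.sum_le_sum (fun i _ => mul_le_mul_of_nonneg_left (per_i i) hβ.le)
  have hsum_eq : ∑ i : Fin n, ((Kμ+γ)*(1/‖x - a i‖^2) + δ*m*‖x - a i‖^(m-2)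
        + (((n:ℝ)-1)*(2*θp*(1/‖x - a i‖^2) + CA) + Q))
      = (Kμ+γ)*S + δ*m*Tm + (((n:ℝ)-1)*(2*θp*S + (n:ℝ)*CA) + (n:ℝ)*Q) := by
    rw [Finset.sum_add_distrib, Finset.sum_add_distrib, Finset.sum_add_distrib,
      Finset.sum_const, card_univ, Fintype.card_fin, nsmul_eq_mul,
      ← Finset.mul_sum, ← Finset.mul_sum, ← Finset.mul_sum,
      Finset.sum_add_distrib, Finset.sum_const, card_univ, Fintype.card_fin, nsmul_eq_mul,
      ← Finset.mul_sum, hSdef, hTmdef]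
  -- final numeric bound
  have hTbound : δ*(m+|m|)*Tm ≤ (ε/2)*S + (n:ℝ)*C₂ := by
    have h1 : δ*(m+|m|)*Tm = ∑ j : Fin n, δ*(m+|m|)*‖x - a j‖^(m-2) := by
      rw [hTmdef, Finset.mul_sum]
    have h2 : ∑ j : Fin n, δ*(m+|m|)*‖x - a j‖^(m-2)
        ≤ ∑ j : Fin n, ((ε/2)*(1/‖x - a j‖^2) + C₂) :=
      Finset.sum_le_sum (fun j _ => hC₂ _ (hRp j))
    have h3 : ∑ j : Fin n, ((ε/2)*(1/‖x - a j‖^2) + C₂) = (ε/2)*S + (n:ℝ)*C₂ := by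
      rw [Finset.sum_add_distrib, Finset.sum_const, card_univ, Fintype.card_fin,
        nsmul_eq_mul, ← Finset.mul_sum, hSdef]
    linarith
  have hθS : ((n:ℝ)-1)*(2*θp)*S + (n:ℝ)*(2*θp)*S ≤ (ε/4)*S := by
    have hcoef : ((n:ℝ)-1)*(2*θp) + (n:ℝ)*(2*θp) ≤ ε/4 := by
      rw [hθpdef]
      rw [show ((n:ℝ)-1)*(2*(ε/(16*n))) + (n:ℝ)*(2*(ε/(16*n))) = ε*((4*n-2)/(16*n)) by
        field_simp; ring]
      rw [show (ε/4 : ℝ) = ε*(1/4) by ring]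
      apply mul_le_mul_of_nonneg_left _ hε.le
      rw [div_le_div_iff₀ (by positivity) (by norm_num)]
      linarith
    calc ((n:ℝ)-1)*(2*θp)*S + (n:ℝ)*(2*θp)*S
        = (((n:ℝ)-1)*(2*θp) + (n:ℝ)*(2*θp))*S := by ring
      _ ≤ (ε/4)*S := mul_le_mul_of_nonneg_right hcoef hS0
  have hfinal : (Kμ+γ)*S + δ*m*Tm + (((n:ℝ)-1)*(2*θp*S + (n:ℝ)*CA) + (n:ℝ)*Q)
      ≤ (n:ℝ)*((n:ℝ)-1)*CA + (n:ℝ)*C₂ := by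
    rw [hKγ, hQ]
    have e1 : ((n:ℝ)-1)*(2*θp*S + (n:ℝ)*CA)
        = ((n:ℝ)-1)*(2*θp)*S + (n:ℝ)*((n:ℝ)-1)*CA := by ring
    have e2 : (n:ℝ)*(2*θp*S + E*Tm) = (n:ℝ)*(2*θp)*S + ((n:ℝ)*E)*Tm := by ring
    rw [e1, e2, hnE, hcdef]
    have e4 : δ*(m+|m|)*Tm = δ*m*Tm + δ * |m| * Tm := by ring
    rw [e4] at hTbound
    have hεS : (0:ℝ) ≤ (ε/4)*S := by positivity
    linarith [hθS, hTbound, hεS]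
  calc ∑ i : Fin n, β * ((1/‖x - a i‖^2) *
      (Kμ + ∑ j : Fin n, (γ/‖x - a j‖^2 + δ*m*‖x - a j‖^(m-2)) * ⟪x - a i, x - a j⟫))
      ≤ β * ∑ i : Fin n, ((Kμ+γ)*(1/‖x - a i‖^2) + δ*m*‖x - a i‖^(m-2)
        + (((n:ℝ)-1)*(2*θp*(1/‖x - a i‖^2) + CA) + Q)) := hsum_le
    _ = β * ((Kμ+γ)*S + δ*m*Tm + (((n:ℝ)-1)*(2*θp*S + (n:ℝ)*CA) + (n:ℝ)*Q)) := by
        rw [hsum_eq]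
    _ ≤ β*((n:ℝ)*((n:ℝ)-1)*CA + (n:ℝ)*C₂) := mul_le_mul_of_nonneg_left hfinal hβ.le
end
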